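/- Let H be a real inner product space, let z_t, ε_∅, ε_tgt ∈ H, let ᾱ ∈ (0,1) and γ ∈ (0,1). Define ẑ(c) = (z_t − √(1−ᾱ)·ε_c)/√ᾱ for c ∈ {∅, tgt}. Then the unique minimizer over z ∈ H of the objective ‖z − ẑ(∅)‖² + (γ/(1−γ))·‖z − ẑ(tgt)‖² equals (z_t − √(1−ᾱ)·ε^γ)/√ᾱ, where ε^γ = ε_∅ + γ·(ε_tgt − ε_∅). That is, the regularized latent optimization of DreamSampler reproduces Tweedie's formula with classifier-free guidance of scale γ. -/

import Mathlib

/-!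
Tweedie's estimate is affine in the predicted noise, so the guided estimate `zbar` is the point
`ẑ(∅) + γ • (ẑ(tgt) - ẑ(∅))` on the line through the two conditional estimates. Multiplying the
objective by `1 - γ > 0` turns it into `(1 - γ)‖z - ẑ(∅)‖² + γ‖z - ẑ(tgt)‖²`, which equals
`‖z - zbar‖²` plus a constant; hence `zbar` is its unique minimizer.
-/

theorem le_and_eq_iff_of_eq_mul_norm_sub_sq_add {E : Type*} [NormedAddCommGroup E]
    {f : E → ℝ} {m : E} {c K : ℝ} (hc : 0 < c)
    (hf : ∀ z, f z = c * ‖z - m‖ ^ 2 + K) (z : E) : f m ≤ f z ∧ (f m = f z ↔ z = m) := by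
  rw [hf, hf, sub_self, norm_zero, ← sub_eq_zero (a := z), ← norm_eq_zero]
  refine ⟨by nlinarith [sq_nonneg ‖z - m‖], ⟨fun h => ?_, fun h => by rw [h]⟩⟩
  have : ‖z - m‖ ^ 2 = 0 := by nlinarith
  exact pow_eq_zero_iff two_ne_zero |>.mp this

theorem one_sub_mul_norm_sub_sq_add_mul_norm_sub_sq {H : Type*} [NormedAddCommGroup H]
    [InnerProductSpace ℝ H] (z a b : H) (γ : ℝ) :
    (1 - γ) * ‖z - a‖ ^ 2 + γ * ‖z - b‖ ^ 2
      = ‖z - (a + γ • (b - a))‖ ^ 2 + γ * (1 - γ) * ‖b - a‖ ^ 2 := by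
  have hza : z - a = (z - (a + γ • (b - a))) + γ • (b - a) := by abel
  have hzb : z - b = (z - (a + γ • (b - a))) - (1 - γ) • (b - a) := by module
  rw [hza, hzb]
  generalize z - (a + γ • (b - a)) = w
  rw [norm_add_sq_real, norm_sub_sq_real, norm_smul, norm_smul,
    real_inner_smul_right, real_inner_smul_right, Real.norm_eq_abs, Real.norm_eq_abs,
    mul_pow, mul_pow, sq_abs, sq_abs]
  ring

theorem dreamsampler_thm1_general
    {H : Type*} [NormedAddCommGroup H] [InnerProductSpace ℝ H]
    (zt εnull εtgt : H) (ᾱ : ℝ)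
    (γ : ℝ) (hγ1 : γ < 1) :
    let zhatnull : H := (Real.sqrt ᾱ)⁻¹ • (zt - Real.sqrt (1 - ᾱ) • εnull)
    let zhattgt : H := (Real.sqrt ᾱ)⁻¹ • (zt - Real.sqrt (1 - ᾱ) • εtgt)
    let εγ : H := εnull + γ • (εtgt - εnull)
    let f : H → ℝ := fun z => ‖z - zhatnull‖ ^ 2 + (γ / (1 - γ)) * ‖z - zhattgt‖ ^ 2
    let zbar : H := (Real.sqrt ᾱ)⁻¹ • (zt - Real.sqrt (1 - ᾱ) • εγ)
    ∀ z : H, f zbar ≤ f z ∧ (f zbar = f z ↔ z = zbar) := by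
  intro zhatnull zhattgt εγ f zbar
  have hpos : 0 < 1 - γ := sub_pos.mpr hγ1
  have hzbar : zbar = zhatnull + γ • (zhattgt - zhatnull) := by
    simp only [zbar, zhatnull, zhattgt, εγ]
    module
  refine le_and_eq_iff_of_eq_mul_norm_sub_sq_add (K := γ * ‖zhattgt - zhatnull‖ ^ 2)
    (inv_pos.mpr hpos) fun z => ?_
  have hdecomp := one_sub_mul_norm_sub_sq_add_mul_norm_sub_sq z zhatnull zhattgt γ
  rw [← hzbar] at hdecomp
  simp only [f]
  field_simp
  linear_combination hdecomp

/-- DreamSampler Theorem 1: the unique minimizer of the regularized latent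
optimization `‖z − zhat(∅)‖² + (γ/(1−γ))·‖z − zhat(tgt)‖²` equals Tweedie's formula
with classifier-free guidance of scale `γ`. -/
theorem dreamsampler_thm1
    {H : Type*} [NormedAddCommGroup H] [InnerProductSpace ℝ H]
    (zt εnull εtgt : H) (ᾱ : ℝ) (hᾱ0 : 0 < ᾱ) (hᾱ1 : ᾱ < 1)
    (γ : ℝ) (hγ0 : 0 < γ) (hγ1 : γ < 1) :
    let zhatnull : H := (Real.sqrt ᾱ)⁻¹ • (zt - Real.sqrt (1 - ᾱ) • εnull)
    let zhattgt : H := (Real.sqrt ᾱ)⁻¹ • (zt - Real.sqrt (1 - ᾱ) • εtgt)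
    let εγ : H := εnull + γ • (εtgt - εnull)
    let f : H → ℝ := fun z => ‖z - zhatnull‖ ^ 2 + (γ / (1 - γ)) * ‖z - zhattgt‖ ^ 2
    let zbar : H := (Real.sqrt ᾱ)⁻¹ • (zt - Real.sqrt (1 - ᾱ) • εγ)
    ∀ z : H, f zbar ≤ f z ∧ (f zbar = f z ↔ z = zbar) :=
  dreamsampler_thm1_general zt εnull εtgt ᾱ γ hγ1
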